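/- arXiv:2509.16852 — 2 statements merged into one kernel-verified Lean document; each statement's English description precedes it below -/
import Mathlib

section
/- For any Hermitian matrix ρ ∈ ℂ^{D×D} with trace(ρ) = 1 and any finite set of unit vectors {w_k}_{k=1}^K satisfying the 2-design condition, the squared ℓ₂ norm of the probability vector (⟨(D/K) w_k w_k†, ρ⟩)_{k=1}^K is bounded below by D‖ρ‖_F²/(K(D+1)). -/
open Matrix Kronecker BigOperators

/-- For Hermitian `ρ` with `trace ρ = 1` and a spherical 2-design `{w_k}`,
the squared ℓ₂ norm of the probability vector `(⟨(D/K) w_k w_k†, ρ⟩)_k` is at least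
`D ‖ρ‖_F² / (K (D+1))`. -/
theorem stmt2 (D K : ℕ) (hD : 0 < D) (hK : 0 < K)
    (w : Fin K → Fin D → ℂ)
    (hunit : ∀ k, star (w k) ⬝ᵥ w k = 1)
    (S : Matrix (Fin D × Fin D) (Fin D × Fin D) ℂ)
    (hS : ∀ x y : Fin D × Fin D, S x y = if x.1 = y.2 ∧ x.2 = y.1 then 1 else 0)
    (hdesign : ((K : ℂ))⁻¹ •
        ∑ k, (vecMulVec (w k) (star (w k)) ⊗ₖ vecMulVec (w k) (star (w k)))
      = (((D : ℂ) * ((D : ℂ) + 1))⁻¹) • ((1 : Matrix (Fin D × Fin D) (Fin D × Fin D) ℂ) + S))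
    (ρ : Matrix (Fin D) (Fin D) ℂ) (hρ : ρ.IsHermitian) (htr : Matrix.trace ρ = 1) :
    ∑ k, ((Matrix.trace ((((D : ℂ) / (K : ℂ)) • vecMulVec (w k) (star (w k))) * ρ)).re) ^ 2
      ≥ (D : ℝ) * (Matrix.trace (ρᴴ * ρ)).re / ((K : ℝ) * ((D : ℝ) + 1)) := by
  have hK0 : (K : ℂ) ≠ 0 := Nat.cast_ne_zero.mpr hK.ne'
  have hPH : ∀ k, (vecMulVec (w k) (star (w k)))ᴴ = vecMulVec (w k) (star (w k)) := by
    intro k; ext i j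
    simp [vecMulVec_apply, Matrix.conjTranspose_apply, mul_comm]
  set t : Fin K → ℂ := fun k => Matrix.trace (vecMulVec (w k) (star (w k)) * ρ) with ht
  -- t k is real
  have htreal : ∀ k, ((t k).re : ℂ) = t k := by
    intro k
    rw [← Complex.conj_eq_iff_re]
    calc (starRingEnd ℂ) (t k) = Matrix.trace ((vecMulVec (w k) (star (w k)) * ρ)ᴴ) := by
          rw [trace_conjTranspose]; rfl
      _ = Matrix.trace (ρᴴ * (vecMulVec (w k) (star (w k)))ᴴ) := by rw [conjTranspose_mul]
      _ = Matrix.trace (ρ * vecMulVec (w k) (star (w k))) := by rw [hρ.eq, hPH]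
      _ = t k := trace_mul_comm _ _
  -- trace of S against ρ ⊗ ρ
  have hStr : Matrix.trace (S * (ρ ⊗ₖ ρ)) = Matrix.trace (ρ * ρ) := by
    simp only [Matrix.trace, Matrix.diag, Matrix.mul_apply, hS, kroneckerMap_apply,
      ite_mul, one_mul, zero_mul, Fintype.sum_prod_type, ite_and,
      Finset.sum_ite_eq, Finset.sum_ite_eq', Finset.mem_univ, if_true]
    rw [Finset.sum_comm]
  -- the key identity
  have key : (K : ℂ)⁻¹ * ∑ k, (t k) ^ 2
      = ((D : ℂ) * ((D : ℂ) + 1))⁻¹ * (1 + Matrix.trace (ρ * ρ)) := by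
    have h := congrArg (fun M => Matrix.trace (M * (ρ ⊗ₖ ρ))) hdesign
    simp only [Matrix.smul_mul, Matrix.sum_mul, trace_smul, trace_sum, Matrix.add_mul,
      Matrix.one_mul, trace_add, smul_eq_mul, ← mul_kronecker_mul, trace_kronecker,
      hStr, htr] at h
    ring_nf at h ⊢
    convert h using 2
  -- trace(ρᴴρ) is a nonneg real
  have hr : Matrix.trace (ρᴴ * ρ) = ((∑ i, ∑ j, Complex.normSq (ρ j i) : ℝ) : ℂ) := by
    simp only [Matrix.trace, Matrix.diag, Matrix.mul_apply, Matrix.conjTranspose_apply]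
    push_cast
    congr 1; ext i; congr 1; ext j
    rw [Complex.normSq_eq_conj_mul_self]; rfl
  set r : ℝ := ∑ i, ∑ j, Complex.normSq (ρ j i) with hrdef
  have hrnn : 0 ≤ r := by
    rw [hrdef]
    exact Finset.sum_nonneg fun i _ => Finset.sum_nonneg fun j _ => Complex.normSq_nonneg _
  have hre : (Matrix.trace (ρᴴ * ρ)).re = r := by rw [hr]; simp
  have hρρ : Matrix.trace (ρ * ρ) = (r : ℂ) := by rw [← hr]; nth_rewrite 1 [← hρ.eq]; rfl
  -- real version of key
  have key2 : ∑ k, ((t k).re) ^ 2 = (K : ℝ) * (((D : ℝ) * ((D : ℝ) + 1))⁻¹ * (1 + r)) := by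
    have h2 : ∑ k, (t k) ^ 2 = (K : ℂ) * (((D : ℂ) * ((D : ℂ) + 1))⁻¹ * (1 + (r : ℂ))) := by
      rw [← hρρ, ← key, ← mul_assoc, mul_inv_cancel₀ hK0, one_mul]
    have h3 : ((∑ k, ((t k).re) ^ 2 : ℝ) : ℂ)
        = (((K : ℝ) * (((D : ℝ) * ((D : ℝ) + 1))⁻¹ * (1 + r)) : ℝ) : ℂ) := by
      push_cast
      rw [← h2]
      exact Finset.sum_congr rfl fun k _ => by rw [htreal k]
    exact_mod_cast h3
  -- rewrite goal terms
  have hterm : ∀ k, (Matrix.trace ((((D : ℂ) / (K : ℂ)) • vecMulVec (w k) (star (w k))) * ρ)).re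
      = (D : ℝ) / (K : ℝ) * (t k).re := by
    intro k
    rw [Matrix.smul_mul, trace_smul, smul_eq_mul]
    obtain ⟨x, hx⟩ : ∃ x : ℝ, t k = (x : ℂ) := ⟨(t k).re, (htreal k).symm⟩
    show (((D : ℂ) / (K : ℂ)) * t k).re = _
    rw [hx]
    push_cast
    simp
  simp only [hterm]
  have hsum : ∑ k, ((D : ℝ) / (K : ℝ) * (t k).re) ^ 2
      = ((D : ℝ) / (K : ℝ)) ^ 2 * ∑ k, ((t k).re) ^ 2 := by
    rw [Finset.mul_sum]; exact Finset.sum_congr rfl fun k _ => by ring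
  rw [hsum, key2, hre, ge_iff_le]
  have hDpos : (0 : ℝ) < (D : ℝ) := by exact_mod_cast hD
  have hKpos : (0 : ℝ) < (K : ℝ) := by exact_mod_cast hK
  rw [div_le_iff₀ (by positivity)]
  have hexp : ((D : ℝ) / (K : ℝ)) ^ 2 * ((K : ℝ) * (((D : ℝ) * ((D : ℝ) + 1))⁻¹ * (1 + r)))
      * ((K : ℝ) * ((D : ℝ) + 1)) = (D : ℝ) * (1 + r) := by
    field_simp
  rw [hexp]
  nlinarith [hrnn, hDpos]
end

section
/- Let f = (f₁, …, f_K) follow a multinomial distribution Multinomial(M, p) with probability vector p, and let a₁, …, a_K be fixed reals with a_max = max_k |a_k|. Then for any t > 0, P(∑_k a_k (f_k/M − p_k) > t) ≤ exp(−(Mt/(4a_max)) · min{1, a_max t / (4∑_k a_k² p_k)}) + exp(−Mt²/(8∑_k a_k² p_k)). -/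
open MeasureTheory ProbabilityTheory BigOperators Finset

lemma exp_le_quad_aux {x : ℝ} (hx : |x| ≤ 1) : Real.exp x ≤ 1 + x + x ^ 2 := by
  have h := Real.exp_bound hx (n := 2) (by norm_num)
  have hsum : ∑ m ∈ Finset.range 2, x ^ m / m.factorial = 1 + x := by
    simp [Finset.sum_range_succ]
  rw [hsum, sq_abs] at h
  norm_num [Nat.factorial] at h
  have := abs_le.mp h
  nlinarith [sq_nonneg x]

set_option maxHeartbeats 2000000 in
/-- Multinomial concentration. If `(f₁,…,f_K) ~ Multinomial(M, p)`
(realized as occurrence counts of `M` i.i.d. categorical trials `X m` with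
`P(X m = k) = p k`), `a` fixed with `a_max = max_k |a_k|`, then for all `t > 0`,
`P(∑_k a_k (f_k/M − p_k) > t)
  ≤ exp(−(Mt/(4 a_max)) min{1, a_max t/(4 ∑ a_k² p_k)}) + exp(−M t²/(8 ∑ a_k² p_k))`. -/
theorem stmt11 {Ω : Type*} [MeasurableSpace Ω] (μ : Measure Ω) [IsProbabilityMeasure μ]
    (M K : ℕ) (hM : 0 < M) (hK : 0 < K)
    (p : Fin K → ℝ) (hp0 : ∀ k, 0 ≤ p k) (hp1 : ∑ k, p k = 1)
    (X : Fin M → Ω → Fin K)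
    (hmeas : ∀ m, Measurable (X m))
    (hindep : iIndepFun X μ)
    (hdist : ∀ m k, (μ {ω | X m ω = k}).toReal = p k)
    (a : Fin K → ℝ) (amax : ℝ)
    (hamax : IsGreatest {x : ℝ | ∃ k, x = |a k|} amax)
    (t : ℝ) (ht : 0 < t) :
    (μ {ω | ∑ k, a k *
        (((Finset.univ.filter (fun m => X m ω = k)).card : ℝ) / (M : ℝ) - p k) > t}).toReal
      ≤ Real.exp (-((M : ℝ) * t / (4 * amax)) *
            min 1 (amax * t / (4 * ∑ k, (a k) ^ 2 * p k)))
        + Real.exp (-((M : ℝ) * t ^ 2) / (8 * ∑ k, (a k) ^ 2 * p k)) := by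
  classical
  set S := ∑ k, (a k) ^ 2 * p k with hSdef
  obtain ⟨⟨k₀, hk₀⟩, hub⟩ := hamax
  have habs : ∀ k, |a k| ≤ amax := fun k => hub ⟨k, rfl⟩
  have hamax0 : 0 ≤ amax := hk₀ ▸ abs_nonneg _
  have hS0 : 0 ≤ S := Finset.sum_nonneg fun k _ => mul_nonneg (sq_nonneg _) (hp0 k)
  have hle1 : ∀ s : Set Ω, (μ s).toReal ≤ 1 := fun s => by
    simpa using ENNReal.toReal_mono ENNReal.one_ne_top (prob_le_one (μ := μ) (s := s))
  rcases eq_or_lt_of_le hamax0 with h0 | hamaxpos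
  · -- degenerate: amax = 0, first exponential equals 1
    have h1 : -((M : ℝ) * t / (4 * amax)) * min 1 (amax * t / (4 * S)) = 0 := by
      rw [← h0]; norm_num
    rw [h1, Real.exp_zero]
    have h2 := hle1 {ω | ∑ k, a k *
        (((Finset.univ.filter (fun m => X m ω = k)).card : ℝ) / (M : ℝ) - p k) > t}
    linarith [Real.exp_pos (-((M : ℝ) * t ^ 2) / (8 * S))]
  rcases eq_or_lt_of_le hS0 with hS0' | hSpos
  · -- degenerate: S = 0, second exponential equals 1
    have h1 : -((M : ℝ) * t ^ 2) / (8 * S) = 0 := by rw [← hS0']; norm_num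
    rw [h1, Real.exp_zero]
    have h2 := hle1 {ω | ∑ k, a k *
        (((Finset.univ.filter (fun m => X m ω = k)).card : ℝ) / (M : ℝ) - p k) > t}
    linarith [Real.exp_pos (-((M : ℝ) * t / (4 * amax)) * min 1 (amax * t / (4 * S)))]
  -- main case : amax > 0, S > 0
  have hMpos : (0 : ℝ) < (M : ℝ) := Nat.cast_pos.mpr hM
  set Ea := ∑ k, a k * p k with hEa
  set g : Fin K → ℝ := fun k => a k - Ea with hg
  set Y : Fin M → Ω → ℝ := fun m ω => g (X m ω) with hY
  set L := min (t / (2 * S)) (1 / (2 * amax)) with hL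
  have hL0 : 0 < L := lt_min (div_pos ht (by linarith)) (by positivity)
  have hLa : L * (2 * amax) ≤ 1 := by
    rw [hL]
    calc min (t / (2 * S)) (1 / (2 * amax)) * (2 * amax)
        ≤ (1 / (2 * amax)) * (2 * amax) :=
          mul_le_mul_of_nonneg_right (min_le_right _ _) (by linarith)
      _ = 1 := by field_simp
  clear_value S Ea L
  have hEabs : |Ea| ≤ amax := by
    calc |Ea| ≤ ∑ k, |a k * p k| := by rw [hEa]; exact Finset.abs_sum_le_sum_abs _ _
      _ = ∑ k, |a k| * p k := by
          refine Finset.sum_congr rfl fun k _ => ?_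
          rw [abs_mul, abs_of_nonneg (hp0 k)]
      _ ≤ ∑ k, amax * p k := Finset.sum_le_sum fun k _ =>
          mul_le_mul_of_nonneg_right (habs k) (hp0 k)
      _ = amax := by rw [← Finset.mul_sum, hp1, mul_one]
  have hgb : ∀ k, |g k| ≤ 2 * amax := by
    intro k
    have h1 : |g k| ≤ |a k| + |Ea| := abs_sub (a k) Ea
    have := habs k
    linarith
  have hgmeas : Measurable g := measurable_of_countable g
  have hYmeas : ∀ m, Measurable (Y m) := fun m => hgmeas.comp (hmeas m)
  have hYindep : iIndepFun Y μ :=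
    hindep.comp (fun _ => g) (fun _ => hgmeas)
  -- expectation of a function of X m
  have hexpect : ∀ (m : Fin M) (φ : Fin K → ℝ), ∫ ω, φ (X m ω) ∂μ = ∑ k, φ k * p k := by
    intro m φ
    have heq : (fun ω => φ (X m ω))
        = fun ω => ∑ k, Set.indicator (X m ⁻¹' {k}) (fun _ => φ k) ω := by
      funext ω
      have hind : ∀ k : Fin K, Set.indicator (X m ⁻¹' {k}) (fun _ => φ k) ω
          = if X m ω = k then φ k else 0 := by
        intro k
        rw [Set.indicator_apply]
        by_cases h : X m ω = k <;> simp [h]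
      simp only [hind]
      rw [Finset.sum_ite_eq]
      simp
    rw [heq, integral_finset_sum]
    · refine Finset.sum_congr rfl fun k _ => ?_
      rw [integral_indicator_const _ ((hmeas m) (measurableSet_singleton k))]
      have hpre : X m ⁻¹' {k} = {ω | X m ω = k} := by ext ω; simp
      rw [hpre, measureReal_def, hdist m k, smul_eq_mul, mul_comm]
    · intro k _
      exact (integrable_const (φ k)).indicator ((hmeas m) (measurableSet_singleton k))
  -- moments of g
  have hsum0 : ∑ k, g k * p k = 0 := by
    simp only [hg, sub_mul]
    rw [Finset.sum_sub_distrib, ← Finset.mul_sum, hp1, ← hEa]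
    ring
  have hsum2 : ∑ k, (g k) ^ 2 * p k = S - Ea ^ 2 := by
    have hterm : ∀ k, (g k) ^ 2 * p k
        = a k ^ 2 * p k - 2 * Ea * (a k * p k) + Ea ^ 2 * p k := by
      intro k; simp only [hg]; ring
    rw [Finset.sum_congr rfl fun k _ => hterm k]
    rw [Finset.sum_add_distrib, Finset.sum_sub_distrib, ← Finset.mul_sum, ← Finset.mul_sum,
      hp1, ← hEa, ← hSdef]
    ring
  -- mgf bound for each Y m
  have hmgf : ∀ m : Fin M, mgf (Y m) μ L ≤ Real.exp (L ^ 2 * S) := by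
    intro m
    have h1 : mgf (Y m) μ L = ∑ k, Real.exp (L * g k) * p k := by
      rw [mgf]
      exact hexpect m (fun k => Real.exp (L * g k))
    have h2 : ∀ k, Real.exp (L * g k) ≤ 1 + L * g k + (L * g k) ^ 2 := by
      intro k
      refine exp_le_quad_aux ?_
      rw [abs_mul, abs_of_pos hL0]
      calc L * |g k| ≤ L * (2 * amax) := by
            exact mul_le_mul_of_nonneg_left (hgb k) hL0.le
        _ ≤ 1 := hLa
    calc mgf (Y m) μ L = ∑ k, Real.exp (L * g k) * p k := h1
      _ ≤ ∑ k, (1 + L * g k + (L * g k) ^ 2) * p k :=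
          Finset.sum_le_sum fun k _ => mul_le_mul_of_nonneg_right (h2 k) (hp0 k)
      _ = (∑ k, p k) + L * (∑ k, g k * p k) + L ^ 2 * (∑ k, (g k) ^ 2 * p k) := by
          rw [Finset.mul_sum, Finset.mul_sum, ← Finset.sum_add_distrib,
            ← Finset.sum_add_distrib]
          refine Finset.sum_congr rfl fun k _ => ?_
          ring
      _ = 1 + L ^ 2 * (S - Ea ^ 2) := by rw [hp1, hsum0, hsum2]; ring
      _ ≤ 1 + L ^ 2 * S := by nlinarith [sq_nonneg Ea, sq_nonneg L]
      _ ≤ Real.exp (L ^ 2 * S) := by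
          linarith [Real.add_one_le_exp (L ^ 2 * S)]
  -- integrability
  have hintm : ∀ m : Fin M, Integrable (fun ω => Real.exp (L * Y m ω)) μ := by
    intro m
    refine Integrable.mono' (integrable_const (Real.exp (L * (2 * amax))))
      (((hYmeas m).const_mul L).exp.aestronglyMeasurable)
      (Filter.Eventually.of_forall fun ω => ?_)
    rw [Real.norm_eq_abs, Real.abs_exp]
    apply Real.exp_le_exp.mpr
    have h1 : Y m ω ≤ 2 * amax := by
      have := abs_le.mp (hgb (X m ω))
      simp only [hY]
      linarith [this.2]
    exact mul_le_mul_of_nonneg_left h1 hL0.le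
  have hintsum : Integrable (fun ω => Real.exp (L * (∑ m, Y m) ω)) μ :=
    hYindep.integrable_exp_mul_sum hYmeas (fun m _ => hintm m)
  -- Chernoff bound
  have hch := measure_ge_le_exp_mul_mgf (μ := μ) (X := ∑ m, Y m) ((M : ℝ) * t) hL0.le hintsum
  have hprod : mgf (∑ m, Y m) μ L ≤ Real.exp ((M : ℝ) * (L ^ 2 * S)) := by
    rw [hYindep.mgf_sum hYmeas Finset.univ]
    calc ∏ m : Fin M, mgf (Y m) μ L ≤ ∏ _m : Fin M, Real.exp (L ^ 2 * S) :=
        Finset.prod_le_prod (fun m _ => mgf_nonneg) (fun m _ => hmgf m)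
      _ = Real.exp ((M : ℝ) * (L ^ 2 * S)) := by
          rw [Finset.prod_const, Finset.card_univ, Fintype.card_fin, ← Real.exp_nat_mul]
  -- counting identity
  have hcount : ∀ ω, ∑ k, a k * (((Finset.univ.filter (fun m => X m ω = k)).card : ℝ))
      = ∑ m, a (X m ω) := by
    intro ω
    calc ∑ k, a k * (((Finset.univ.filter (fun m => X m ω = k)).card : ℝ))
        = ∑ k, ∑ m : Fin M, (if X m ω = k then a k else 0) := by
          refine Finset.sum_congr rfl fun k _ => ?_
          rw [Finset.card_filter]
          push_cast
          rw [Finset.mul_sum]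
          refine Finset.sum_congr rfl fun m _ => ?_
          by_cases h : X m ω = k <;> simp [h]
      _ = ∑ m : Fin M, ∑ k, (if X m ω = k then a k else 0) := Finset.sum_comm
      _ = ∑ m, a (X m ω) := by
          refine Finset.sum_congr rfl fun m _ => ?_
          rw [Finset.sum_ite_eq]
          simp
  -- event inclusion
  have hsub : {ω | ∑ k, a k *
        (((Finset.univ.filter (fun m => X m ω = k)).card : ℝ) / (M : ℝ) - p k) > t}
      ⊆ {ω | (M : ℝ) * t ≤ (∑ m, Y m) ω} := by
    intro ω hω
    simp only [Set.mem_setOf_eq] at hω ⊢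
    have hsumY : (∑ m, Y m) ω = ∑ m, Y m ω := by simp
    have hTeq : (∑ m, Y m) ω
        = (∑ k, a k * (((Finset.univ.filter (fun m => X m ω = k)).card : ℝ)))
          - (M : ℝ) * Ea := by
      rw [hsumY, hcount ω]
      simp only [hY, hg]
      rw [Finset.sum_sub_distrib, Finset.sum_const, Finset.card_univ, Fintype.card_fin,
        nsmul_eq_mul]
    have hkey : ∑ k, a k *
          (((Finset.univ.filter (fun m => X m ω = k)).card : ℝ) / (M : ℝ) - p k)
        = ((∑ m, Y m) ω) / (M : ℝ) := by
      rw [hTeq, sub_div, mul_comm (M : ℝ) Ea, mul_div_assoc, div_self hMpos.ne', mul_one,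
        Finset.sum_div, hEa, ← Finset.sum_sub_distrib]
      refine Finset.sum_congr rfl fun k _ => ?_
      ring
    rw [hkey] at hω
    have := (lt_div_iff₀ hMpos).mp hω
    linarith
  -- final chain
  have hmain : (μ {ω | ∑ k, a k *
        (((Finset.univ.filter (fun m => X m ω = k)).card : ℝ) / (M : ℝ) - p k) > t}).toReal
      ≤ Real.exp ((M : ℝ) * (L ^ 2 * S) - L * ((M : ℝ) * t)) := by
    calc (μ {ω | ∑ k, a k *
          (((Finset.univ.filter (fun m => X m ω = k)).card : ℝ) / (M : ℝ) - p k) > t}).toReal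
        ≤ (μ {ω | (M : ℝ) * t ≤ (∑ m, Y m) ω}).toReal :=
          ENNReal.toReal_mono (measure_ne_top _ _) (measure_mono hsub)
      _ ≤ Real.exp (-L * ((M : ℝ) * t)) * mgf (∑ m, Y m) μ L := hch
      _ ≤ Real.exp (-L * ((M : ℝ) * t)) * Real.exp ((M : ℝ) * (L ^ 2 * S)) := by
          exact mul_le_mul_of_nonneg_left hprod (Real.exp_pos _).le
      _ = Real.exp ((M : ℝ) * (L ^ 2 * S) - L * ((M : ℝ) * t)) := by
          rw [← Real.exp_add]; ring_nf
  rcases le_or_gt (t / (2 * S)) (1 / (2 * amax)) with hc | hc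
  · -- variance regime: L = t / (2S)
    have hLval : L = t / (2 * S) := hL.trans (min_eq_left hc)
    have hbound : (M : ℝ) * (L ^ 2 * S) - L * ((M : ℝ) * t) ≤ -((M : ℝ) * t ^ 2) / (8 * S) := by
      rw [hLval]
      have heq : (M : ℝ) * ((t / (2 * S)) ^ 2 * S) - (t / (2 * S)) * ((M : ℝ) * t)
          = -((M : ℝ) * t ^ 2) / (4 * S) := by
        field_simp
        ring
      rw [heq]
      rw [div_le_div_iff₀ (by linarith) (by linarith)]
      nlinarith [mul_pos hMpos (mul_pos ht ht), sq_nonneg t]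
    have h2 : Real.exp ((M : ℝ) * (L ^ 2 * S) - L * ((M : ℝ) * t))
        ≤ Real.exp (-((M : ℝ) * t ^ 2) / (8 * S)) := Real.exp_le_exp.mpr hbound
    have h3 : (0 : ℝ) < Real.exp (-((M : ℝ) * t / (4 * amax)) * min 1 (amax * t / (4 * S))) :=
      Real.exp_pos _
    linarith
  · -- Poisson regime: L = 1 / (2 amax)
    have hLval : L = 1 / (2 * amax) := hL.trans (min_eq_right hc.le)
    have hSamax : S < amax * t := by
      have := (div_lt_div_iff₀ (by linarith) (by linarith)).mp hc
      nlinarith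
    have hbound : (M : ℝ) * (L ^ 2 * S) - L * ((M : ℝ) * t)
        ≤ -((M : ℝ) * t / (4 * amax)) * min 1 (amax * t / (4 * S)) := by
      have hstep1 : (M : ℝ) * (L ^ 2 * S) - L * ((M : ℝ) * t) ≤ -((M : ℝ) * t / (4 * amax)) := by
        rw [hLval]
        have heq : (M : ℝ) * ((1 / (2 * amax)) ^ 2 * S) - (1 / (2 * amax)) * ((M : ℝ) * t)
            = ((M : ℝ) * S - 2 * amax * ((M : ℝ) * t)) / (4 * amax ^ 2) := by
          field_simp
          ring
        rw [heq, div_le_iff₀ (by positivity : (0:ℝ) < 4 * amax ^ 2)]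
        have h4 : (M : ℝ) * t / (4 * amax) * (4 * amax ^ 2) = (M : ℝ) * t * amax := by
          field_simp
        rw [neg_mul, h4]
        have h5 := mul_le_mul_of_nonneg_left hSamax.le hMpos.le
        ring_nf at h5 ⊢
        linarith [h5]
      have hstep2 : -((M : ℝ) * t / (4 * amax)) ≤
          -((M : ℝ) * t / (4 * amax)) * min 1 (amax * t / (4 * S)) := by
        have hc0 : 0 ≤ (M : ℝ) * t / (4 * amax) := by positivity
        have h6 := mul_le_mul_of_nonneg_left
          (min_le_left (1 : ℝ) (amax * t / (4 * S))) hc0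
        rw [neg_mul]
        linarith
      linarith
    have h2 : Real.exp ((M : ℝ) * (L ^ 2 * S) - L * ((M : ℝ) * t))
        ≤ Real.exp (-((M : ℝ) * t / (4 * amax)) * min 1 (amax * t / (4 * S))) :=
      Real.exp_le_exp.mpr hbound
    have h3 : (0 : ℝ) < Real.exp (-((M : ℝ) * t ^ 2) / (8 * S)) := Real.exp_pos _
    linarith
end
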